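/- arXiv:1509.08049 — 4 statements merged into one kernel-verified Lean document; each statement's English description precedes it below -/
import Mathlib

section
/- Let k be a perfect field of characteristic p > 0 and M a k-vector space. Let Z/pZ act on the p-th tensor power M^{⊗p} by cyclic permutation with generator σ. Then the map sending m ∈ M to the class of m^{⊗p} in the coinvariants (M^{⊗p})_σ is additive. -/
open scoped TensorProduct

/-- The cyclic permutation `σ` of the `p`-th tensor power `M^{⊗p}`, as a `k`-linear map. -/
noncomputable def cyclicPerm (k M : Type*) [CommRing k] [AddCommGroup M] [Module k M]
    (p : ℕ) :
    PiTensorProduct k (fun _ : Fin p => M) →ₗ[k] PiTensorProduct k (fun _ : Fin p => M) :=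
  (PiTensorProduct.reindex k (fun _ : Fin p => M) (finRotate p)).toLinearMap

/-- The map `ψ : M → (M^{⊗p})_σ` sending `m` to the class of `m ⊗ m ⊗ ⋯ ⊗ m` in the
coinvariants `(M^{⊗p})_σ = M^{⊗p} ⧸ range (1 - σ)`. -/
noncomputable def psiPow (k M : Type*) [CommRing k] [AddCommGroup M] [Module k M]
    (p : ℕ) (m : M) :
    PiTensorProduct k (fun _ : Fin p => M) ⧸
      LinearMap.range (LinearMap.id - cyclicPerm k M p) :=
  Submodule.Quotient.mk (PiTensorProduct.tprod k (fun _ : Fin p => m))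

/-!
Expanding `(m + m')^{⊗p}` multilinearly gives a sum, over subsets `s ⊆ Fin p`, of the tensors with
factor `m` on `s` and `m'` off `s`. In the coinvariants the class of such a tensor only depends on
the orbit of `s` under the rotation group, which has order `p`. A subset other than `∅` and `univ`
is not fixed by a rotation, so its orbit has `p` elements and contributes `p` times a class, which
is zero in characteristic `p`. Only `m^{⊗p}` and `m'^{⊗p}` survive.
-/

open MulAction Finset
open scoped Pointwise

theorem IsPGroup.sum_eq_zero_of_smul_invariant {p : ℕ} [Fact p.Prime] {G α A : Type*} [Group G]
    (hG : IsPGroup p G) [MulAction G α] [Fintype α] [AddCommMonoid A] (hA : ∀ a : A, p • a = 0)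
    {f : α → A} (hf : ∀ (g : G) x, f (g • x) = f x) (hfix : ∀ x ∈ fixedPoints G α, f x = 0) :
    ∑ x, f x = 0 := by
  classical
  rw [← sum_fiberwise univ (Quotient.mk (orbitRel G α)) f]
  refine sum_eq_zero fun ω _ => ?_
  induction ω using Quotient.inductionOn with | h x => ?_
  have hfiber : ∑ y with ⟦y⟧ = (⟦x⟧ : orbitRel.Quotient G α), f y
      = Fintype.card (orbit G x) • f x := by
    rw [← Set.toFinset_card, ← sum_const]
    refine sum_congr ?_ fun y hy => ?_
    · ext y
      simp only [mem_filter, mem_univ, true_and, Set.mem_toFinset]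
      exact Quotient.eq
    · obtain ⟨g, rfl⟩ := Set.mem_toFinset.mp hy
      exact hf g x
  obtain ⟨n, hn⟩ := hG.card_orbit x
  rw [hfiber, ← Nat.card_eq_fintype_card, hn]
  rcases n with _ | n
  · rw [hfix x (mem_fixedPoints_iff_card_orbit_eq_one.mpr (by simpa using hn)), smul_zero]
  · rw [pow_succ, mul_smul, hA, smul_zero]

theorem IsPGroup.sum_eq_sum_fixedPoints {p : ℕ} [Fact p.Prime] {G α A : Type*} [Group G]
    (hG : IsPGroup p G) [MulAction G α] [Fintype α] [DecidablePred (· ∈ fixedPoints G α)]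
    [AddCommMonoid A] (hA : ∀ a : A, p • a = 0) {f : α → A} (hf : ∀ (g : G) x, f (g • x) = f x) :
    ∑ x, f x = ∑ x with x ∈ fixedPoints G α, f x := by
  have hnonfixed : ∑ x with x ∉ fixedPoints G α, f x = 0 := by
    rw [sum_filter]
    refine hG.sum_eq_zero_of_smul_invariant hA (fun g x => ?_) fun x hx => if_neg (not_not.2 hx)
    have hmem : g • x ∈ fixedPoints G α ↔ x ∈ fixedPoints G α :=
      ⟨fun h => (by simpa using h g⁻¹ : x = g • x) ▸ h, fun h g' => by rw [h g, h g']⟩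
    simp only [hmem, hf]
  rw [← sum_filter_add_sum_filter_not univ (· ∈ fixedPoints G α) f, hnonfixed, add_zero]

theorem Finset.eq_empty_or_eq_univ_of_forall_smul_eq {G α : Type*} [SMul G α]
    [IsPretransitive G α] [Fintype α] [DecidableEq α] {s : Finset α} (hs : ∀ g : G, g • s = s) :
    s = ∅ ∨ s = univ := by
  refine s.eq_empty_or_nonempty.imp id fun ⟨a, ha⟩ => eq_univ_of_forall fun b => ?_
  obtain ⟨g, rfl⟩ := exists_smul_eq G a b
  exact hs g ▸ smul_mem_smul_finset ha

theorem Equiv.Perm.IsCycle.isPretransitive_zpowers {α : Type*} [Fintype α] [DecidableEq α]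
    {σ : Equiv.Perm α} (hσ : σ.IsCycle) (hsupp : σ.support = univ) :
    IsPretransitive (Subgroup.zpowers σ) α := by
  refine ⟨fun a b => ?_⟩
  have hmoved : ∀ x, σ x ≠ x := fun x => Equiv.Perm.mem_support.mp (hsupp ▸ mem_univ x)
  obtain ⟨i, hi⟩ := hσ.exists_zpow_eq (hmoved a) (hmoved b)
  exact ⟨⟨σ ^ i, Subgroup.zpow_mem_zpowers σ i⟩, hi⟩

theorem PiTensorProduct.reindex_tprod_piecewise {R ι M : Type*} [CommSemiring R] [DecidableEq ι]
    [AddCommMonoid M] [Module R M] (e : Equiv.Perm ι) (s : Finset ι) (x y : M) :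
    reindex R (fun _ => M) e (tprod R (s.piecewise (fun _ => x) (fun _ => y))) =
      tprod R ((e • s).piecewise (fun _ => x) (fun _ => y)) := by
  rw [reindex_tprod]
  congr 1
  ext i
  simp only [piecewise, ← inv_smul_mem_iff]
  rfl

theorem isPGroup_zpowers_finRotate (p : ℕ) [hp : Fact p.Prime] :
    IsPGroup p (Subgroup.zpowers (finRotate p)) := by
  refine IsPGroup.of_card (n := 1) ?_
  rw [Nat.card_zpowers, (isCycle_finRotate_of_le hp.out.two_le).orderOf,
    support_finRotate_of_le hp.out.two_le, card_univ, Fintype.card_fin, pow_one]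

theorem mem_fixedPoints_zpowers_finRotate_iff {p : ℕ} (hp : 2 ≤ p) (s : Finset (Fin p)) :
    s ∈ fixedPoints (Subgroup.zpowers (finRotate p)) (Finset (Fin p)) ↔ s = univ ∨ s = ∅ := by
  refine ⟨fun hs => ?_, ?_⟩
  · have := (isCycle_finRotate_of_le hp).isPretransitive_zpowers (support_finRotate_of_le hp)
    exact (eq_empty_or_eq_univ_of_forall_smul_eq (G := Subgroup.zpowers (finRotate p)) hs).symm
  · rintro (rfl | rfl) g
    exacts [smul_finset_univ, smul_finset_empty g]

section Coinvariants

variable {k M : Type*} [CommRing k] [AddCommGroup M] [Module k M] {p : ℕ}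

theorem mk_cyclicPerm (x : PiTensorProduct k (fun _ : Fin p => M)) :
    (Submodule.Quotient.mk (cyclicPerm k M p x) :
        _ ⧸ LinearMap.range (LinearMap.id - cyclicPerm k M p)) = Submodule.Quotient.mk x := by
  rw [Submodule.Quotient.eq]
  exact ⟨-x, by simp [neg_add_eq_sub]⟩

variable (k) in
noncomputable def psiPiecewise (m m' : M) (s : Finset (Fin p)) :
    PiTensorProduct k (fun _ : Fin p => M) ⧸ LinearMap.range (LinearMap.id - cyclicPerm k M p) :=
  Submodule.Quotient.mk (PiTensorProduct.tprod k (s.piecewise (fun _ => m) (fun _ => m')))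

theorem psiPow_add_eq_sum_psiPiecewise (m m' : M) :
    psiPow k M p (m + m') = ∑ s, psiPiecewise k m m' s := by
  have hexpand : PiTensorProduct.tprod k (fun _ : Fin p => m + m') =
      ∑ s : Finset (Fin p), PiTensorProduct.tprod k (s.piecewise (fun _ => m) (fun _ => m')) :=
    MultilinearMap.map_add_univ _ _ _
  rw [psiPow, hexpand, ← Submodule.mkQ_apply, map_sum]
  rfl

theorem psiPiecewise_univ (m m' : M) :
    psiPiecewise k m m' (univ : Finset (Fin p)) = psiPow k M p m := by
  rw [psiPiecewise, piecewise_univ, psiPow]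

theorem psiPiecewise_empty (m m' : M) :
    psiPiecewise k m m' (∅ : Finset (Fin p)) = psiPow k M p m' := by
  rw [psiPiecewise, piecewise_empty, psiPow]

theorem psiPiecewise_smul {g : Equiv.Perm (Fin p)} (hg : g ∈ Subgroup.zpowers (finRotate p))
    (m m' : M) (s : Finset (Fin p)) : psiPiecewise k m m' (g • s) = psiPiecewise k m m' s := by
  have hrot (s : Finset (Fin p)) :
      psiPiecewise k m m' (finRotate p • s) = psiPiecewise k m m' s := by
    rw [psiPiecewise, ← PiTensorProduct.reindex_tprod_piecewise]
    exact mk_cyclicPerm _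
  obtain ⟨n, rfl⟩ : ∃ n : ℕ, finRotate p ^ n = g := mem_powers_iff_mem_zpowers.mpr hg
  clear hg
  induction n generalizing s with
  | zero => rw [pow_zero, one_smul]
  | succ n ih => rw [pow_succ, mul_smul, ih, hrot]

end Coinvariants

theorem psiPow_additive_general {k M : Type*} [Field k] (p : ℕ) [Fact p.Prime]
    [CharP k p] [AddCommGroup M] [Module k M] (m m' : M) :
    psiPow k M p (m + m') = psiPow k M p m + psiPow k M p m' := by
  classical
  have hp : 2 ≤ p := (Fact.out : p.Prime).two_le
  have hchar : ∀ z : PiTensorProduct k (fun _ : Fin p => M) ⧸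
      LinearMap.range (LinearMap.id - cyclicPerm k M p), p • z = 0 := fun z => by
    rw [← Nat.cast_smul_eq_nsmul k, CharP.cast_eq_zero, zero_smul]
  have hfixed : ({s | s ∈ fixedPoints (Subgroup.zpowers (finRotate p)) (Finset (Fin p))} :
      Finset (Finset (Fin p))) = {univ, ∅} := by
    ext s
    simp [mem_fixedPoints_zpowers_finRotate_iff hp]
  rw [psiPow_add_eq_sum_psiPiecewise, (isPGroup_zpowers_finRotate p).sum_eq_sum_fixedPoints hchar
    fun g s => psiPiecewise_smul g.2 m m' s, hfixed, sum_pair univ_nonempty.ne_empty,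
    psiPiecewise_univ, psiPiecewise_empty]

/-- Over a perfect field `k` of characteristic `p`, the map
`ψ : M → (M^{⊗p})_σ`, `m ↦ [m^{⊗p}]`, is additive. -/
theorem psiPow_additive {k M : Type*} [Field k] [PerfectField k] (p : ℕ) [Fact p.Prime]
    [CharP k p] [AddCommGroup M] [Module k M] (m m' : M) :
    psiPow k M p (m + m') = psiPow k M p m + psiPow k M p m' :=
  psiPow_additive_general p m m'
end

section
/- Let k be a perfect field of characteristic p > 0 and M a k-vector space, with Z/pZ acting on M^{⊗p} by cyclic permutation with generator σ. Then the map ψ : M → (M^{⊗p})_σ, m ↦ [m^{⊗p}], is injective and its image equals the kernel of the trace map tr = 1 + σ + ⋯ + σ^{p-1} : (M^{⊗p})_σ → (M^{⊗p})^σ. -/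
open scoped TensorProduct

/-!
The basis `b` of `M` gives the basis `f ↦ b (f 0) ⊗ ⋯ ⊗ b (f (p-1))` of `M^{⊗p}`, indexed by
`f : Fin p → ι`, and `σ` permutes it by rotating `f`. For any permutation basis, `range (1 - σ)`
is the common kernel of the orbit sums of coordinates. As `p` is prime, an orbit of the rotation
is either a constant `f`, where the orbit sum is a single coordinate, or free, where the orbit sum
is a coordinate of `N x` with `N = 1 + σ + ⋯ + σ^{p-1}`. So on `ker N` the class modulo
`range (1 - σ)` is recorded exactly by the coordinates at the constants, which for `m^{⊗p}` are
the `p`-th powers of the coordinates of `m`. Finally `m^{⊗p} ∈ ker N` because `σ` fixes it and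
`p = 0` in `k`, and Frobenius is bijective on the perfect field `k`.
-/

section

open Module Equiv Equiv.Perm

namespace Equiv.Perm

variable {X : Type*} {p : ℕ} [Fact p.Prime] {g : Perm X}

open scoped Classical in
lemma sum_range_ite_pow_apply_eq (R : Type*) [Semiring R] (hg : g ^ p = 1) {z w : X}
    (hw : g w ≠ w) :
    ∑ n ∈ Finset.range p, (if (g ^ n) z = w then (1 : R) else 0) =
      if g.SameCycle z w then 1 else 0 := by
  split_ifs with h
  · have hz : g z ≠ z := fun hz => hw (h.eq_of_left hz ▸ hz)
    have hper : Function.minimalPeriod g z = p :=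
      Function.minimalPeriod_eq_prime (by rw [Function.IsPeriodicPt, iterate_eq_pow, hg]; rfl) hz
    obtain ⟨i, rfl⟩ := h
    have hp : (0 : ℤ) < p := by exact_mod_cast (Fact.out : p.Prime).pos
    have hlt : (i % p).toNat < p := by have := Int.emod_lt_of_pos i hp; omega
    have hpow : (g ^ (i % p).toNat) z = (g ^ i) z := by
      rw [zpow_eq_zpow_emod' i hg, ← zpow_natCast, Int.toNat_of_nonneg (Int.emod_nonneg i hp.ne')]
    rw [Finset.sum_eq_single_of_mem _ (Finset.mem_range.mpr hlt), if_pos hpow]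
    intro n hn hne
    refine if_neg fun hn' =>
      hne (Function.iterate_injOn_Iio_minimalPeriod (f := g) (x := z) ?_ ?_ ?_)
    · simpa [hper] using hn
    · simpa [hper] using hlt
    · simp only [iterate_eq_pow, hn', hpow]
  · exact Finset.sum_eq_zero fun n _ => if_neg fun hn => h ⟨n, by simpa using hn⟩

end Equiv.Perm

namespace Module.Basis

variable {R V X : Type*} [CommRing R] [AddCommGroup V] [Module R V]

open scoped Classical in
noncomputable def orbitSum (b : Basis X R V) (g : Perm X) (w : X) : V →ₗ[R] R :=
  b.constr R fun z => if g.SameCycle w z then 1 else 0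

variable {b : Basis X R V} {g : Perm X} {σ : V →ₗ[R] V}

open scoped Classical in
lemma orbitSum_basis (w z : X) : b.orbitSum g w (b z) = if g.SameCycle w z then 1 else 0 := by
  rw [orbitSum, constr_basis]

open scoped Classical in
lemma orbitSum_apply (w : X) (x : V) :
    b.orbitSum g w x = ∑ z ∈ (b.repr x).support with g.SameCycle w z, b.repr x z := by
  classical
  rw [orbitSum, constr_apply, Finsupp.sum, Finset.sum_filter]
  simp only [smul_eq_mul, mul_ite, mul_one, mul_zero]

lemma orbitSum_eq_coord_of_fixed {w : X} (hw : g w = w) : b.orbitSum g w = b.coord w := by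
  classical
  refine b.ext fun z => ?_
  rw [orbitSum_basis, coord_apply, repr_self, Finsupp.single_apply]
  exact if_congr ⟨fun h => (h.eq_of_left hw).symm, fun h => h ▸ .refl g w⟩ rfl rfl

lemma pow_apply_basis (hσ : ∀ y, σ (b y) = b (g y)) (n : ℕ) (y : X) :
    (σ ^ n) (b y) = b ((g ^ n) y) := by
  induction n with
  | zero => rfl
  | succ n ih => rw [pow_succ', Module.End.mul_apply, ih, hσ, pow_succ', Perm.mul_apply]

lemma sub_mem_range_of_sameCycle (hσ : ∀ y, σ (b y) = b (g y)) {y z : X}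
    (h : g.SameCycle y z) : b y - b z ∈ LinearMap.range (LinearMap.id - σ) := by
  have along : ∀ (y : X) (n : ℕ), b y - b ((g ^ n) y) ∈ LinearMap.range (LinearMap.id - σ) := by
    intro y n
    induction n with
    | zero => simp
    | succ n ih =>
      have hstep : b ((g ^ n) y) - b ((g ^ (n + 1)) y) ∈ LinearMap.range (LinearMap.id - σ) :=
        ⟨b ((g ^ n) y), by
          rw [LinearMap.sub_apply, LinearMap.id_apply, hσ, pow_succ', Perm.mul_apply]⟩
      simpa using add_mem ih hstep
  obtain ⟨i, rfl⟩ := h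
  obtain ⟨n, rfl | rfl⟩ := Int.eq_nat_or_neg i
  · exact along y n
  · simpa using neg_mem (along ((g ^ (-(n : ℤ))) y) n)

lemma orbitSum_comp (hσ : ∀ y, σ (b y) = b (g y)) (w : X) :
    b.orbitSum g w ∘ₗ σ = b.orbitSum g w :=
  b.ext fun z => by
    classical
    rw [LinearMap.comp_apply, hσ, orbitSum_basis, orbitSum_basis]
    exact if_congr sameCycle_apply_right rfl rfl

lemma orbitSum_eq_zero_of_mem_range (hσ : ∀ y, σ (b y) = b (g y)) {x : V}
    (hx : x ∈ LinearMap.range (LinearMap.id - σ)) (w : X) : b.orbitSum g w x = 0 := by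
  obtain ⟨y, rfl⟩ := hx
  simp [← LinearMap.comp_apply (b.orbitSum g w) σ, orbitSum_comp hσ]

lemma mem_range_of_forall_orbitSum_eq_zero (hσ : ∀ y, σ (b y) = b (g y)) {x : V}
    (hx : ∀ w, b.orbitSum g w x = 0) : x ∈ LinearMap.range (LinearMap.id - σ) := by
  classical
  induction hcard : (b.repr x).support.card using Nat.strong_induction_on generalizing x with
  | _ n ih =>
  obtain hempty | ⟨y, hy⟩ := (b.repr x).support.eq_empty_or_nonempty
  · rw [Finsupp.support_eq_empty, LinearEquiv.map_eq_zero_iff] at hempty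
    exact hempty ▸ zero_mem _
  obtain ⟨z, hz, hzy, hyz⟩ : ∃ z ∈ (b.repr x).support, z ≠ y ∧ g.SameCycle y z := by
    by_contra! hnone
    have hsum := hx y
    rw [orbitSum_apply, Finset.sum_eq_single_of_mem y (Finset.mem_filter.mpr ⟨hy, .refl g y⟩)]
      at hsum
    · exact Finsupp.mem_support_iff.mp hy hsum
    · intro z hz hzy
      exact absurd (Finset.mem_filter.mp hz).2 (hnone z (Finset.mem_filter.mp hz).1 hzy)
  -- Moving the coefficient of `b y` onto `b z` changes `x` by an element of `range (id - σ)`,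
  -- keeps all orbit sums and shrinks the support.
  have hmove : b.repr x y • (b y - b z) ∈ LinearMap.range (LinearMap.id - σ) :=
    Submodule.smul_mem _ _ (sub_mem_range_of_sameCycle hσ hyz)
  have hsupp : (b.repr (x - b.repr x y • (b y - b z))).support ⊆ (b.repr x).support.erase y := by
    intro w hw
    rw [Finsupp.mem_support_iff] at hw
    simp only [map_sub, map_smul, repr_self, Finsupp.coe_sub, Finsupp.coe_smul,
      Pi.sub_apply, Pi.smul_apply, Finsupp.single_apply, smul_eq_mul] at hw
    rw [Finset.mem_erase]
    by_cases hwy : y = w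
    · subst hwy
      simp [hzy] at hw
    by_cases hwz : z = w
    · exact hwz ▸ ⟨hzy, hz⟩
    · simp only [hwy, hwz, if_false, sub_zero, mul_zero] at hw
      exact ⟨Ne.symm hwy, Finsupp.mem_support_iff.mpr hw⟩
  have hrest := ih _ ((Finset.card_le_card hsupp).trans_lt
    (hcard ▸ Finset.card_erase_lt_of_mem hy)) (x := x - b.repr x y • (b y - b z))
    (fun w => by rw [map_sub, hx, orbitSum_eq_zero_of_mem_range hσ hmove, sub_zero]) rfl
  simpa using add_mem hrest hmove

lemma orbitSum_eq_repr_sum_pow (hσ : ∀ y, σ (b y) = b (g y)) {p : ℕ} [Fact p.Prime]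
    (hg : g ^ p = 1) {w : X} (hw : g w ≠ w) (x : V) :
    b.orbitSum g w x = b.repr ((∑ n ∈ Finset.range p, σ ^ n) x) w := by
  classical
  suffices b.orbitSum g w = b.coord w ∘ₗ ∑ n ∈ Finset.range p, σ ^ n from
    congr($this x)
  refine b.ext fun z => ?_
  rw [orbitSum_basis, LinearMap.comp_apply, LinearMap.sum_apply, map_sum, sameCycle_comm,
    ← sum_range_ite_pow_apply_eq R hg hw]
  simp only [pow_apply_basis hσ, coord_apply, repr_self, Finsupp.single_apply]

lemma mem_range_of_mem_ker_sum_pow (hσ : ∀ y, σ (b y) = b (g y)) {p : ℕ} [Fact p.Prime]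
    (hg : g ^ p = 1) {x : V} (hN : (∑ n ∈ Finset.range p, σ ^ n) x = 0)
    (hfix : ∀ y, g y = y → b.repr x y = 0) : x ∈ LinearMap.range (LinearMap.id - σ) := by
  refine mem_range_of_forall_orbitSum_eq_zero hσ fun w => ?_
  by_cases hw : g w = w
  · rw [orbitSum_eq_coord_of_fixed hw, coord_apply, hfix w hw]
  · rw [orbitSum_eq_repr_sum_pow hσ hg hw, hN, map_zero, Finsupp.zero_apply]

end Module.Basis

lemma finRotate_pow_self (n : ℕ) : finRotate n ^ n = 1 := by
  rcases n with _ | _ | n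
  · rfl
  · exact Subsingleton.elim (α := Perm (Fin 1)) _ _
  · have horder := (isCycle_finRotate (n := n)).orderOf
    rw [support_finRotate, Finset.card_univ, Fintype.card_fin] at horder
    calc finRotate (n + 2) ^ (n + 2) = finRotate (n + 2) ^ orderOf (finRotate (n + 2)) := by
          rw [horder]
      _ = 1 := pow_orderOf_eq_one _

def cyclicShift (ι : Type*) (p : ℕ) : Perm (Fin p → ι) := (finRotate p).arrowCongr (Equiv.refl ι)

variable {ι : Type*} {p : ℕ}

lemma cyclicShift_pow_apply (n : ℕ) (f : Fin p → ι) :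
    (cyclicShift ι p ^ n) f = f ∘ ⇑(finRotate p ^ n).symm := by
  induction n with
  | zero => rfl
  | succ n ih => rw [pow_succ', Perm.mul_apply, ih, pow_succ']; rfl

lemma cyclicShift_pow_self : cyclicShift ι p ^ p = 1 := by
  ext f : 1
  rw [cyclicShift_pow_apply, finRotate_pow_self]
  rfl

lemma eq_const_of_cyclicShift_eq [NeZero p] {f : Fin p → ι} (h : cyclicShift ι p f = f) :
    f = Function.const _ (f 0) := by
  have hinv : f ∘ finRotate p = f := by
    conv_lhs => rw [← h]
    ext a
    simp [cyclicShift]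
  funext a
  have := congr_fun (Function.iterate_invariant hinv a.1) 0
  rwa [← finCycle_eq_finRotate_iterate, Function.comp_apply, finCycle_apply, zero_add] at this

open PiTensorProduct

variable {k M : Type*} [CommRing k] [AddCommGroup M] [Module k M]

lemma cyclicPerm_piTensorProduct_basis (b : Basis ι k M) (f : Fin p → ι) :
    cyclicPerm k M p (Basis.piTensorProduct (fun _ => b) f) =
      Basis.piTensorProduct (fun _ => b) (cyclicShift ι p f) := by
  simp only [Basis.piTensorProduct_apply, cyclicPerm, LinearEquiv.coe_coe, reindex_tprod]
  rfl

lemma piTensorProduct_repr_tprod_const (b : Basis ι k M) (m : M) (i : ι) :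
    (Basis.piTensorProduct fun _ : Fin p => b).repr (tprod k fun _ => m) (Function.const _ i) =
      b.repr m i ^ p := by
  simp [Basis.piTensorProduct_repr_tprod_apply]

lemma sum_cyclicPerm_pow_tprod_const [CharP k p] (m : M) :
    (∑ n ∈ Finset.range p, cyclicPerm k M p ^ n) (tprod k fun _ => m) = 0 := by
  have hfix : ∀ n, (cyclicPerm k M p ^ n) (tprod k fun _ => m) = tprod k fun _ => m := by
    intro n
    induction n with
    | zero => rfl
    | succ n ih => rw [pow_succ', Module.End.mul_apply, ih, cyclicPerm, LinearEquiv.coe_coe,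
        reindex_tprod]
  rw [LinearMap.sum_apply, Finset.sum_congr rfl fun n _ => hfix n, Finset.sum_const,
    Finset.card_range, ← Nat.cast_smul_eq_nsmul k, CharP.cast_eq_zero, zero_smul]

lemma mem_range_id_sub_cyclicPerm_iff [Fact p.Prime] (b : Basis ι k M)
    {x : PiTensorProduct k fun _ : Fin p => M}
    (hx : (∑ n ∈ Finset.range p, cyclicPerm k M p ^ n) x = 0) :
    x ∈ LinearMap.range (LinearMap.id - cyclicPerm k M p) ↔
      ∀ i, (Basis.piTensorProduct fun _ => b).repr x (Function.const _ i) = 0 := by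
  have : NeZero p := ⟨(Fact.out : p.Prime).ne_zero⟩
  have hσ := cyclicPerm_piTensorProduct_basis (p := p) b
  refine ⟨fun hrange i => ?_, fun hconst => ?_⟩
  · have hfix : cyclicShift ι p (Function.const _ i) = Function.const _ i := rfl
    simpa [Basis.orbitSum_eq_coord_of_fixed hfix] using
      Basis.orbitSum_eq_zero_of_mem_range hσ hrange (Function.const _ i)
  · refine Basis.mem_range_of_mem_ker_sum_pow hσ cyclicShift_pow_self hx fun f hf => ?_
    rw [eq_const_of_cyclicShift_eq hf]
    exact hconst (f 0)

end

/-- Over a perfect field `k` of characteristic `p`, the map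
`ψ : M → (M^{⊗p})_σ`, `m ↦ [m^{⊗p}]`, is injective, and its image is exactly the kernel of
the trace map `tr = 1 + σ + ⋯ + σ^{p-1} : (M^{⊗p})_σ → (M^{⊗p})^σ`, i.e. the image under
the quotient projection of the kernel of `N = 1 + σ + ⋯ + σ^{p-1}` on `M^{⊗p}`. -/
theorem psiPow_injective_range_eq_ker_trace {k M : Type*} [Field k] [PerfectField k]
    (p : ℕ) [Fact p.Prime] [CharP k p] [AddCommGroup M] [Module k M] :
    Function.Injective (psiPow k M p) ∧
      Set.range (psiPow k M p) =
        (Submodule.Quotient.mk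
            (p := LinearMap.range (LinearMap.id - cyclicPerm k M p))) ''
          (LinearMap.ker (∑ i ∈ Finset.range p, (cyclicPerm k M p) ^ i) : Set _) := by
  let b := Module.Basis.ofVectorSpace k M
  let B := Basis.piTensorProduct fun _ : Fin p => b
  have hker (m : M) : PiTensorProduct.tprod k (fun _ : Fin p => m) ∈
      LinearMap.ker (∑ i ∈ Finset.range p, (cyclicPerm k M p) ^ i) :=
    sum_cyclicPerm_pow_tprod_const m
  refine ⟨fun m m' h => ?_, Set.Subset.antisymm ?_ ?_⟩
  · have hdiff := (mem_range_id_sub_cyclicPerm_iff b (sub_mem (hker m) (hker m'))).mp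
      ((Submodule.Quotient.eq _).mp h)
    refine b.repr.injective (Finsupp.ext fun i => frobenius_inj k p ?_)
    simpa [sub_eq_zero, piTensorProduct_repr_tprod_const, frobenius_def] using hdiff i
  · rintro _ ⟨m, rfl⟩
    exact ⟨_, hker m, rfl⟩
  · rintro _ ⟨x, hx, rfl⟩
    obtain ⟨m, hm⟩ : ∃ m : M, ∀ i, b.repr m i ^ p = B.repr x (Function.const _ i) :=
      ⟨b.repr.symm (((B.repr x).comapDomain _ (Function.const_injective.injOn)).mapRange
        (frobeniusEquiv k p).symm (map_zero _)), fun i => by simp⟩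
    refine ⟨m, (Submodule.Quotient.eq _).mpr
      ((mem_range_id_sub_cyclicPerm_iff b (sub_mem (hker m) hx)).mpr fun i => ?_)⟩
    rw [map_sub, Finsupp.sub_apply, piTensorProduct_repr_tprod_const, hm, sub_self]
end

section
/- Let k be a perfect field of characteristic p > 0, M a k-vector space, and n ≥ 0. Let σ generate the cyclic group acting on M^{⊗p^n} by cyclic permutation of tensor factors. Let ψ^n : M → (M^{⊗p^n})_σ be the n-fold iterate of the p-th power map (sending m to the class of m^{⊗p^n}) and let φ̂^n : (M^{⊗p^n})^σ → M be its dual (the n-fold iterate of the map identifying M with the cokernel of the trace). Then the square commutes: the composition of the inclusion (M^{⊗p^n})^σ → M^{⊗p^n} with the projection M^{⊗p^n} → (M^{⊗p^n})_σ equals ψ^n ∘ φ̂^n. -/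
/-- The diagonal `q`-tuple `(s, s, …, s)`. -/
def diagTuple (q : ℕ) {S : Type*} (s : S) : ZMod q → S := fun _ => s

/-- The cyclic shift on `q`-tuples, generating the `Z/qZ`-action. -/
def cycTuple (q : ℕ) {S : Type*} (x : ZMod q → S) : ZMod q → S := fun i => x (i + 1)

/-- The `q`-th tensor power map on the free module `M = k[S]`: for `m = ∑ c_s s`,
`m^{⊗q} = ∑_{x ∈ S^q} (∏ i, c_{x i}) x ∈ k[S^q] = M^{⊗q}`. -/
noncomputable def tensorPow (k : Type*) {S : Type*} [CommRing k] (q : ℕ) [NeZero q]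
    (m : S →₀ k) : (ZMod q → S) →₀ k :=
  Finsupp.onFinset (Fintype.piFinset fun _ : ZMod q => m.support)
    (fun x => ∏ i, m (x i))
    (fun x hx => by
      simp only [Fintype.mem_piFinset, Finsupp.mem_support_iff]
      intro i hi
      exact hx (Finset.prod_eq_zero (Finset.mem_univ i) hi))

/-- The `n`-fold iterate `φ̂ⁿ : (M^{⊗pⁿ})^σ → M` of the dual of the `p`-th power map: in
a basis `S` of `M`, it sends `∑_{orbits} c_O e_O` to `∑_{s ∈ S} c_{(s,…,s)}^{1/pⁿ} s`
(read off the coefficients of the diagonal and take `pⁿ`-th roots via the inverse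
Frobenius of the perfect field `k`). -/
noncomputable def phiHatIter (k : Type*) {S : Type*} [DecidableEq S] [CommRing k]
    (p n : ℕ) [ExpChar k p] [PerfectRing k p] (f : (ZMod (p ^ n) → S) →₀ k) : S →₀ k :=
  Finsupp.onFinset (f.support.image fun x => x 0)
    (fun s => (⇑(frobeniusEquiv k p).symm)^[n] (f (diagTuple (p ^ n) s)))
    (fun s hs =>
      Finset.mem_image.mpr
        ⟨diagTuple (p ^ n) s,
          Finsupp.mem_support_iff.mpr fun h => hs (by
            show (⇑(frobeniusEquiv k p).symm)^[n] (f (diagTuple (p ^ n) s)) = 0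
            rw [h]
            exact Function.iterate_fixed (map_zero _) n),
          rfl⟩)


set_option linter.unusedSectionVars false

namespace CPaux

instance cycVAdd (q : ℕ) (S : Type*) : VAdd (ZMod q) (ZMod q → S) :=
  ⟨fun j x i => x (i + j)⟩

instance cycAddAction (q : ℕ) (S : Type*) : AddAction (ZMod q) (ZMod q → S) where
  zero_vadd x := funext fun i => by show x (i + 0) = x i; rw [add_zero]
  add_vadd j j' x := funext fun i => by
    show x (i + (j + j')) = x (i + j + j')
    rw [add_assoc]

variable {S k : Type*}

lemma vadd_apply (q : ℕ) (j : ZMod q) (x : ZMod q → S) (i : ZMod q) :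
    (j +ᵥ x) i = x (i + j) := rfl

lemma cycTuple_eq_vadd (q : ℕ) (x : ZMod q → S) : cycTuple q x = (1 : ZMod q) +ᵥ x := rfl

def cycEquiv (q : ℕ) (S : Type*) : (ZMod q → S) ≃ (ZMod q → S) where
  toFun := cycTuple q
  invFun x i := x (i - 1)
  left_inv x := funext fun i => by simp [cycTuple]
  right_inv x := funext fun i => by simp [cycTuple]

lemma cycTuple_coe (q : ℕ) : cycTuple q (S := S) = ⇑(cycEquiv q S) := rfl

variable [Field k] [DecidableEq S]

lemma sigma_apply (q : ℕ) (h : (ZMod q → S) →₀ k) (y : ZMod q → S) :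
    Finsupp.lmapDomain k k (cycTuple q) h y = h ((-1 : ZMod q) +ᵥ y) := by
  rw [Finsupp.lmapDomain_apply, cycTuple_coe, Finsupp.mapDomain_equiv_apply]
  congr 1
  funext i
  show y (i - 1) = y (i + (-1))
  rw [sub_eq_add_neg]

lemma inv_eval (q : ℕ) [NeZero q] (h : (ZMod q → S) →₀ k)
    (hinv : Finsupp.lmapDomain k k (cycTuple q) h = h)
    (j : ZMod q) (x : ZMod q → S) : h (j +ᵥ x) = h x := by
  have key : ∀ y : ZMod q → S, h ((1 : ZMod q) +ᵥ y) = h y := by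
    intro y
    conv_lhs => rw [← hinv]
    rw [sigma_apply]
    congr 1
    rw [← add_vadd]
    norm_num
  have hnat : ∀ (t : ℕ) (y : ZMod q → S), h ((t : ZMod q) +ᵥ y) = h y := by
    intro t
    induction t with
    | zero => intro y; rw [Nat.cast_zero, zero_vadd]
    | succ t ih =>
        intro y
        have : ((t + 1 : ℕ) : ZMod q) = (t : ZMod q) + 1 := by push_cast; ring
        rw [this, add_vadd, ih, key]
  have : ((j.val : ℕ) : ZMod q) = j := by rw [ZMod.natCast_val, ZMod.cast_id]
  rw [← this, hnat]

lemma single_vadd_sub_mem (q : ℕ) [NeZero q] (c : k) (x : ZMod q → S) (j : ZMod q) :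
    Finsupp.single (j +ᵥ x) c - Finsupp.single x c ∈
      LinearMap.range (LinearMap.id - Finsupp.lmapDomain k k (cycTuple q)) := by
  have base : ∀ y : ZMod q → S, Finsupp.single ((1 : ZMod q) +ᵥ y) c - Finsupp.single y c ∈
      LinearMap.range (LinearMap.id - Finsupp.lmapDomain k k (cycTuple q)) := by
    intro y
    refine ⟨-Finsupp.single y c, ?_⟩
    simp only [LinearMap.sub_apply, LinearMap.id_apply, map_neg,
      Finsupp.lmapDomain_apply, Finsupp.mapDomain_single, cycTuple_eq_vadd]
    abel
  have hnat : ∀ t : ℕ, Finsupp.single (((t : ZMod q)) +ᵥ x) c - Finsupp.single x c ∈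
      LinearMap.range (LinearMap.id - Finsupp.lmapDomain k k (cycTuple q)) := by
    intro t
    induction t with
    | zero => rw [Nat.cast_zero, zero_vadd, sub_self]; exact zero_mem _
    | succ t ih =>
        have h1 : ((t + 1 : ℕ) : ZMod q) = 1 + (t : ZMod q) := by push_cast; ring
        have h2 : Finsupp.single (((t + 1 : ℕ) : ZMod q) +ᵥ x) c - Finsupp.single x c =
            (Finsupp.single ((1 : ZMod q) +ᵥ ((t : ZMod q) +ᵥ x)) c
              - Finsupp.single ((t : ZMod q) +ᵥ x) c)
            + (Finsupp.single ((t : ZMod q) +ᵥ x) c - Finsupp.single x c) := by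
          rw [h1, add_vadd]; abel
        rw [h2]
        exact add_mem (base _) ih
  have : ((j.val : ℕ) : ZMod q) = j := by rw [ZMod.natCast_val, ZMod.cast_id]
  rw [← this]
  exact hnat _

lemma orbit_card_cast_zero (p : ℕ) [Fact p.Prime] [CharP k p] (n : ℕ) [NeZero (p ^ n)]
    (x : ZMod (p ^ n) → S) (hx : x ≠ diagTuple (p ^ n) (x 0)) :
    (((Finset.univ.image (fun j : ZMod (p ^ n) => j +ᵥ x)).card : k)) = 0 := by
  set O : Finset (ZMod (p ^ n) → S) := Finset.univ.image (fun j : ZMod (p ^ n) => j +ᵥ x)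
    with hO
  have hcoe : (O : Set (ZMod (p ^ n) → S)) = AddAction.orbit (ZMod (p ^ n)) x := by
    rw [hO, Finset.coe_image, Finset.coe_univ, Set.image_univ]; rfl
  have hdvd : O.card ∣ p ^ n := by
    have h1 : Nat.card (AddAction.orbit (ZMod (p ^ n)) x) = O.card := by
      rw [← hcoe, Nat.card_coe_set_eq, Set.ncard_coe_finset]
    have h2 := Nat.card_congr (AddAction.orbitEquivQuotientStabilizer (ZMod (p ^ n)) x)
    have h3 := AddSubgroup.card_quotient_dvd_card (AddAction.stabilizer (ZMod (p ^ n)) x)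
    rw [Nat.card_zmod] at h3
    rw [← h1, h2]
    exact h3
  have hne1 : O.card ≠ 1 := by
    intro h1
    obtain ⟨a, ha⟩ := Finset.card_eq_one.mp h1
    have hxa : x = a := by
      have hxO : x ∈ O := Finset.mem_image.mpr ⟨0, Finset.mem_univ _, zero_vadd _ _⟩
      rw [ha, Finset.mem_singleton] at hxO
      exact hxO
    apply hx
    funext i
    have hmem : i +ᵥ x ∈ O := Finset.mem_image.mpr ⟨i, Finset.mem_univ _, rfl⟩
    rw [ha, Finset.mem_singleton, ← hxa] at hmem
    have := congrFun hmem 0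
    rw [vadd_apply, zero_add] at this
    exact this
  obtain ⟨i, hi, hcard⟩ := (Nat.dvd_prime_pow Fact.out).mp hdvd
  have hi0 : i ≠ 0 := by
    rintro rfl
    rw [pow_zero] at hcard
    exact hne1 hcard
  rw [CharP.cast_eq_zero_iff k p, hcard]
  exact dvd_pow_self p hi0

end CPaux

namespace CPaux

variable {S k : Type*} [Field k] [DecidableEq S]

lemma tensorPow_apply (q : ℕ) [NeZero q] (m : S →₀ k) (x : ZMod q → S) :
    tensorPow k q m x = ∏ i, m (x i) := rfl

lemma tensorPow_diag (q : ℕ) [NeZero q] (m : S →₀ k) (s : S) :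
    tensorPow k q m (diagTuple q s) = m s ^ q := by
  rw [tensorPow_apply]
  simp [diagTuple, Finset.prod_const, ZMod.card]

lemma tensorPow_inv (q : ℕ) [NeZero q] (m : S →₀ k) :
    Finsupp.lmapDomain k k (cycTuple q) (tensorPow k q m) = tensorPow k q m := by
  ext y
  rw [sigma_apply, tensorPow_apply, tensorPow_apply]
  exact Fintype.prod_equiv (Equiv.subRight (1 : ZMod q)) _ _ (fun i => by
    simp [vadd_apply, Equiv.subRight, sub_eq_add_neg])

lemma frob_iterate_pow (p : ℕ) [ExpChar k p] [PerfectRing k p] (n : ℕ) (a : k) :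
    ((⇑(frobeniusEquiv k p).symm)^[n] a) ^ (p ^ n) = a := by
  induction n generalizing a with
  | zero => simp
  | succ n ih =>
      rw [Function.iterate_succ_apply', pow_succ, pow_mul']
      have : ((frobeniusEquiv k p).symm ((⇑(frobeniusEquiv k p).symm)^[n] a)) ^ p
          = (⇑(frobeniusEquiv k p).symm)^[n] a := by
        have := (frobeniusEquiv k p).apply_symm_apply ((⇑(frobeniusEquiv k p).symm)^[n] a)
        rwa [frobeniusEquiv_apply, frobenius_def] at this
      rw [this, ih]

end CPaux

namespace CPaux

variable {S k : Type*} [Field k] [DecidableEq S]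

lemma memRange_of_inv_of_diagZero (p : ℕ) [Fact p.Prime] [CharP k p] (n : ℕ)
    [NeZero (p ^ n)] (N : ℕ) (h : (ZMod (p ^ n) → S) →₀ k)
    (hcard : h.support.card ≤ N)
    (hinv : Finsupp.lmapDomain k k (cycTuple (p ^ n)) h = h)
    (hdiag : ∀ s : S, h (diagTuple (p ^ n) s) = 0) :
    h ∈ LinearMap.range (LinearMap.id - Finsupp.lmapDomain k k (cycTuple (p ^ n))) := by
  induction N generalizing h with
  | zero =>
      have : h = 0 := by
        rw [← Finsupp.support_eq_empty, ← Finset.card_eq_zero]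
        omega
      rw [this]; exact zero_mem _
  | succ N ih =>
      rcases h.support.eq_empty_or_nonempty with hemp | ⟨x, hx⟩
      · have : h = 0 := Finsupp.support_eq_empty.mp hemp
        rw [this]; exact zero_mem _
      · set c := h x with hc
        have hc0 : c ≠ 0 := Finsupp.mem_support_iff.mp hx
        set O : Finset (ZMod (p ^ n) → S) :=
          Finset.univ.image (fun j : ZMod (p ^ n) => j +ᵥ x) with hO
        have hxO : x ∈ O := Finset.mem_image.mpr ⟨0, Finset.mem_univ _, zero_vadd _ _⟩
        have hval : ∀ y ∈ O, h y = c := by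
          intro y hy
          obtain ⟨j, -, rfl⟩ := Finset.mem_image.mp hy
          exact inv_eval _ h hinv j x
        have hxnd : x ≠ diagTuple (p ^ n) (x 0) := fun hEq => hc0 (by rw [hc, hEq, hdiag])
        have hcard0 : ((O.card : k)) = 0 := orbit_card_cast_zero p n x hxnd
        have hOvadd : ∀ (j : ZMod (p ^ n)), ∀ y ∈ O, j +ᵥ y ∈ O := by
          intro j y hy
          obtain ⟨j', -, rfl⟩ := Finset.mem_image.mp hy
          exact Finset.mem_image.mpr ⟨j + j', Finset.mem_univ _, add_vadd j j' x⟩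
        have hdO : ∀ s : S, diagTuple (p ^ n) s ∉ O := by
          intro s hs
          obtain ⟨j, -, hEq⟩ := Finset.mem_image.mp hs
          apply hxnd
          have hconst : ∀ i, x i = s := by
            intro i
            have := congrFun hEq (i - j)
            rw [vadd_apply, sub_add_cancel] at this
            exact this
          funext i
          rw [hconst i, diagTuple, hconst 0]
        set u : (ZMod (p ^ n) → S) →₀ k := ∑ y ∈ O, Finsupp.single y c with hu
        have huapp : ∀ y, u y = if y ∈ O then c else 0 := by
          intro y
          rw [hu, Finsupp.finset_sum_apply]
          simp only [Finsupp.single_apply]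
          exact Finset.sum_ite_eq' O y (fun _ => c)
        have humem : u ∈ LinearMap.range
            (LinearMap.id - Finsupp.lmapDomain k k (cycTuple (p ^ n))) := by
          have hrw : u = ∑ y ∈ O, (Finsupp.single y c - Finsupp.single x c) := by
            rw [Finset.sum_sub_distrib, Finset.sum_const, ← Nat.cast_smul_eq_nsmul k,
              hcard0, zero_smul, sub_zero]
          rw [hrw]
          refine sum_mem (fun y hy => ?_)
          obtain ⟨j, -, rfl⟩ := Finset.mem_image.mp hy
          exact single_vadd_sub_mem _ c x j
        have huinv : Finsupp.lmapDomain k k (cycTuple (p ^ n)) u = u := by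
          ext y
          rw [sigma_apply, huapp, huapp]
          have : ((-1 : ZMod (p ^ n)) +ᵥ y ∈ O) ↔ (y ∈ O) := by
            constructor
            · intro hm
              have := hOvadd 1 _ hm
              rwa [← add_vadd, add_neg_cancel, zero_vadd] at this
            · exact hOvadd _ _
          rw [if_congr this rfl rfl]
        set h' := h - u with hh'
        have hsub : h'.support ⊆ h.support.erase x := by
          intro y hy
          rw [Finsupp.mem_support_iff, hh', Finsupp.sub_apply, huapp] at hy
          by_cases hyO : y ∈ O
          · rw [if_pos hyO, hval y hyO, sub_self] at hy; exact absurd rfl hy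
          · rw [if_neg hyO, sub_zero] at hy
            exact Finset.mem_erase.mpr ⟨fun hyx => hyO (hyx ▸ hxO), Finsupp.mem_support_iff.mpr hy⟩
        have hcard' : h'.support.card ≤ N := by
          have h1 := Finset.card_le_card hsub
          rw [Finset.card_erase_of_mem hx] at h1
          omega
        have hinv' : Finsupp.lmapDomain k k (cycTuple (p ^ n)) h' = h' := by
          rw [hh', map_sub, hinv, huinv]
        have hdiag' : ∀ s : S, h' (diagTuple (p ^ n) s) = 0 := by
          intro s
          rw [hh', Finsupp.sub_apply, hdiag, huapp, if_neg (hdO s), sub_zero]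
        have := ih h' hcard' hinv' hdiag'
        have hfin : h = h' + u := by rw [hh']; abel
        rw [hfin]
        exact add_mem this humem

end CPaux

/-- Let `k` be a perfect field of characteristic `p`, `M = k[S]` a
`k`-vector space, `n ≥ 0`, and let `σ` generate the cyclic group acting on `M^{⊗pⁿ}` by
cyclic permutation of tensor factors.  Let `ψⁿ : M → (M^{⊗pⁿ})_σ`, `m ↦ [m^{⊗pⁿ}]`, be
the `n`-fold iterate of the `p`-th power map and `φ̂ⁿ : (M^{⊗pⁿ})^σ → M` its dual.  Then
the square commutes: for every invariant `f` (i.e. `σ f = f`), the image of `f` under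
the composition of the inclusion `(M^{⊗pⁿ})^σ → M^{⊗pⁿ}` with the projection
`M^{⊗pⁿ} → (M^{⊗pⁿ})_σ` equals `ψⁿ (φ̂ⁿ f)`. -/
theorem invariants_to_coinvariants_eq_psi_comp_phiHat {k S : Type*} [DecidableEq S]
    [Field k]
    [PerfectField k] (p : ℕ) [Fact p.Prime] [CharP k p] [ExpChar k p]
    [PerfectRing k p] (n : ℕ) [NeZero (p ^ n)]
    (σ : ((ZMod (p ^ n) → S) →₀ k) →ₗ[k] ((ZMod (p ^ n) → S) →₀ k))
    (hσ : σ = Finsupp.lmapDomain k k (cycTuple (p ^ n)))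
    (f : (ZMod (p ^ n) → S) →₀ k) (hf : σ f = f) :
    (Submodule.Quotient.mk f :
        _ ⧸ LinearMap.range (LinearMap.id - σ)) =
      Submodule.Quotient.mk (tensorPow k (p ^ n) (phiHatIter k p n f)) := by
  subst hσ
  rw [Submodule.Quotient.eq]
  set g := phiHatIter k p n f with hg
  set w := f - tensorPow k (p ^ n) g with hw
  have hwinv : Finsupp.lmapDomain k k (cycTuple (p ^ n)) w = w := by
    rw [hw, map_sub, hf, CPaux.tensorPow_inv]
  have hwdiag : ∀ s : S, w (diagTuple (p ^ n) s) = 0 := by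
    intro s
    rw [hw, Finsupp.sub_apply, CPaux.tensorPow_diag]
    have hgapp : g s = (⇑(frobeniusEquiv k p).symm)^[n] (f (diagTuple (p ^ n) s)) := rfl
    rw [hgapp, CPaux.frob_iterate_pow, sub_self]
  exact CPaux.memRange_of_inv_of_diagZero p n w.support.card w le_rfl hwinv hwdiag
end

section
/- Let k be a field of characteristic p > 2 and A = k[t, t^{-1}] the Laurent polynomial algebra, identified with the group algebra k[Z]. Define the map on Hochschild chains in degree 1 by ζΦ(⟨t^{n₀}, t^{n₁}⟩) = ⟨t^{p n₀ + (p−1) n₁}, t^{n₁}⟩, extended linearly. Then under the identification of HH₁(A) with the Kähler differentials Ω¹_{A/k} sending ⟨t^{n₀}, t^{n₁}⟩ to n₁ t^{n₁+n₀−1} dt, the map ζΦ corresponds to the inverse Cartier map C^{-1} determined by C^{-1}(t^n · dt/t) = t^{pn} · dt/t, i.e. C^{-1}(n₁ t^{n₀+n₁−1} dt) = n₁ t^{p(n₀+n₁)−1} dt. -/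
/-!
Every derivation satisfies `D(tⁿ) = n tⁿ⁻¹ D t` on Laurent polynomials, for negative `n` too since
`t⁻ᵐ` is inverse to `tᵐ`. Hence the HKR image `t^{p n₀ + (p-1) n₁} d(t^{n₁})` is
`n₁ t^{p n₀ + (p-1) n₁ + n₁ - 1} dt`, and the exponent equals `p (n₀ + n₁) - 1`.
-/

open LaurentPolynomial

namespace LaurentPolynomial

variable {R M : Type*} [CommRing R] [AddCommGroup M] [Module R[T;T⁻¹] M] [Module R M]
  (D : Derivation R R[T;T⁻¹] M)

theorem derivation_T_natCast (m : ℕ) :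
    D (T m) = (m : ℤ) • (T ((m : ℤ) - 1) : R[T;T⁻¹]) • D (T 1) := by
  cases m with
  | zero => simp [T_zero]
  | succ k =>
    have h : (T (k + 1 : ℕ) : R[T;T⁻¹]) = T 1 ^ (k + 1) := by rw [T_pow, mul_one]
    rw [h, D.leibniz_pow, Nat.add_sub_cancel, T_pow, mul_one, natCast_zsmul, Nat.cast_succ,
      add_sub_cancel_right]

theorem derivation_T (n : ℤ) : D (T n) = n • (T (n - 1) : R[T;T⁻¹]) • D (T 1) := by
  obtain ⟨m, rfl | rfl⟩ := Int.eq_nat_or_neg n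
  · exact derivation_T_natCast D m
  · have hinv : (T (-(m : ℤ)) : R[T;T⁻¹]) * T m = 1 := by rw [← T_add, neg_add_cancel, T_zero]
    rw [D.leibniz_of_mul_eq_one hinv, derivation_T_natCast, T_pow, smul_comm, smul_smul,
      neg_mul, ← T_add, neg_smul, smul_neg, ← neg_smul]
    congr 3
    ring

end LaurentPolynomial

theorem zetaPhi_is_inverse_cartier_degree_one_general {k : Type*} [Field k] (p : ℕ)
    (n₀ n₁ : ℤ) :
    (T ((p : ℤ) * n₀ + ((p : ℤ) - 1) * n₁) : LaurentPolynomial k) •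
        (KaehlerDifferential.D k (LaurentPolynomial k)) (T n₁) =
      n₁ • ((T ((p : ℤ) * (n₀ + n₁) - 1) : LaurentPolynomial k) •
        (KaehlerDifferential.D k (LaurentPolynomial k)) (T 1)) := by
  rw [derivation_T, smul_comm, smul_smul, ← T_add]
  congr 3
  ring

/-- Let `k` be a field of odd characteristic `p` and
`A = k[t,t⁻¹] = k[ℤ]`.  The degree-one comparison of the map
`ζΦ(⟨t^{n₀}, t^{n₁}⟩) = ⟨t^{p n₀ + (p-1) n₁}, t^{n₁}⟩` with the inverse Cartier map:
under the HKR identification `⟨a, b⟩ ↦ a db` of degree-one Hochschild chains with Kähler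
differentials, the image `t^{p n₀ + (p-1) n₁} d(t^{n₁})` of `ζΦ(⟨t^{n₀}, t^{n₁}⟩)` equals
`C⁻¹(n₁ t^{n₀+n₁-1} dt) = n₁ t^{p(n₀+n₁)-1} dt` in `Ω¹_{A/k}`. -/
theorem zetaPhi_is_inverse_cartier_degree_one {k : Type*} [Field k] (p : ℕ)
    [Fact p.Prime] [CharP k p] (hp : p ≠ 2) (n₀ n₁ : ℤ) :
    (T ((p : ℤ) * n₀ + ((p : ℤ) - 1) * n₁) : LaurentPolynomial k) •
        (KaehlerDifferential.D k (LaurentPolynomial k)) (T n₁) =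
      n₁ • ((T ((p : ℤ) * (n₀ + n₁) - 1) : LaurentPolynomial k) •
        (KaehlerDifferential.D k (LaurentPolynomial k)) (T 1)) :=
  zetaPhi_is_inverse_cartier_degree_one_general p n₀ n₁
end
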